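/- arXiv:2602.08651 — 5 statements merged into one kernel-verified Lean document; each statement's English description precedes it below -/
import Mathlib

section
/- Let φ be a holomorphic self-map of D of the form φ(z) = z·τ(z) for some holomorphic τ on D, and suppose the second derivative φ'' is bounded on D. Then τ, τ', and τ'' are all bounded on D. -/
/-!
Since `φ` maps `D` into `D` and `φ(0) = 0`, the Schwarz lemma gives `‖τ‖ ≤ 1`. The mean value
theorem turns the bound on `φ''` into a bound on `φ'`. Differentiating `φ(z) = z τ(z)` gives
`z τ'(z) = φ'(z) - τ(z)` and `z τ''(z) = φ''(z) - 2 τ'(z)`, so `z τ'` and `z τ''` are bounded;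
and whenever `z g(z)` is bounded on `D` by `C`, so is `g` (Schwarz lemma applied to `z g(z)`,
whose difference quotient at `0` is `g`).
-/

open Metric Filter Topology

section IdMul

variable {𝕜 : Type*} [NontriviallyNormedField 𝕜] {g : 𝕜 → 𝕜} {z : 𝕜}

theorem deriv_id_mul (hg : DifferentiableAt 𝕜 g z) :
    deriv (fun w => w * g w) z = g z + z * deriv g z := by
  simp [deriv_fun_mul differentiableAt_fun_id hg]

theorem deriv_deriv_id_mul (hg : ∀ᶠ w in 𝓝 z, DifferentiableAt 𝕜 g w)
    (hg' : DifferentiableAt 𝕜 (deriv g) z) :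
    deriv (deriv fun w => w * g w) z = 2 * deriv g z + z * deriv (deriv g) z := by
  have h : deriv (fun w => w * g w) =ᶠ[𝓝 z] fun w => g w + w * deriv g w :=
    hg.mono fun w hw => deriv_id_mul hw
  rw [h.deriv_eq, deriv_fun_add hg.self_of_nhds (differentiableAt_fun_id.fun_mul hg'),
    deriv_id_mul hg']
  ring

end IdMul

theorem norm_le_add_mul_of_norm_deriv_le {𝕜 E : Type*} [RCLike 𝕜] [NormedAddCommGroup E]
    [NormedSpace 𝕜 E] {f : 𝕜 → E} {c z : 𝕜} {r M : ℝ} (hf : DifferentiableOn 𝕜 f (ball c r))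
    (hbd : ∀ w ∈ ball c r, ‖deriv f w‖ ≤ M) (hz : z ∈ ball c r) :
    ‖f z‖ ≤ ‖f c‖ + M * r := by
  have hc : c ∈ ball c r := mem_ball_self (pos_of_mem_ball hz)
  have hM : 0 ≤ M := (norm_nonneg _).trans (hbd c hc)
  have hmvt : ‖f z - f c‖ ≤ M * ‖z - c‖ := (convex_ball c r).norm_image_sub_le_of_norm_deriv_le
    (fun w hw => hf.differentiableAt (isOpen_ball.mem_nhds hw)) hbd hc hz
  calc ‖f z‖ ≤ ‖f c‖ + ‖f z - f c‖ := norm_le_norm_add_norm_sub' _ _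
    _ ≤ ‖f c‖ + M * r := by
      gcongr
      exact hmvt.trans (mul_le_mul_of_nonneg_left (mem_ball_iff_norm.mp hz).le hM)

theorem norm_le_div_of_norm_id_mul_le {g : ℂ → ℂ} {z : ℂ} {R C : ℝ}
    (hg : DifferentiableOn ℂ g (ball 0 R)) (hbd : ∀ w ∈ ball (0 : ℂ) R, ‖w * g w‖ ≤ C)
    (hz : z ∈ ball (0 : ℂ) R) : ‖g z‖ ≤ C / R := by
  have hdslope : dslope (fun w => w * g w) 0 z = g z := by
    rcases eq_or_ne z 0 with rfl | hz0
    · simp [deriv_id_mul (hg.differentiableAt (isOpen_ball.mem_nhds hz))]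
    · simpa using dslope_sub_smul_of_ne g hz0
  rw [← hdslope]
  refine Complex.norm_dslope_le_div_of_mapsTo_ball (differentiableOn_id.fun_mul hg) ?_ hz
  intro w hw
  simpa using hbd w hw

theorem stmt_6 (τ : ℂ → ℂ)
    (hτ : DifferentiableOn ℂ τ (ball (0:ℂ) 1))
    (hmap : Set.MapsTo (fun z => z * τ z) (ball (0:ℂ) 1) (ball (0:ℂ) 1))
    (hφ'' : ∃ M : ℝ, ∀ z ∈ ball (0:ℂ) 1, ‖deriv (deriv (fun z => z * τ z)) z‖ ≤ M) :
    (∃ M : ℝ, ∀ z ∈ ball (0:ℂ) 1, ‖τ z‖ ≤ M) ∧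
    (∃ M : ℝ, ∀ z ∈ ball (0:ℂ) 1, ‖deriv τ z‖ ≤ M) ∧
    (∃ M : ℝ, ∀ z ∈ ball (0:ℂ) 1, ‖deriv (deriv τ) z‖ ≤ M) := by
  obtain ⟨M, hM⟩ := hφ''
  have hU : IsOpen (ball (0 : ℂ) 1) := isOpen_ball
  have hτ' := hτ.deriv hU
  have hφ' : DifferentiableOn ℂ (deriv fun z => z * τ z) (ball 0 1) :=
    (differentiableOn_id.fun_mul hτ).deriv hU
  set A := ‖deriv (fun z => z * τ z) 0‖ + M * 1
  have hτ_bd (z) (hz : z ∈ ball (0 : ℂ) 1) : ‖τ z‖ ≤ 1 := by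
    simpa using norm_le_div_of_norm_id_mul_le hτ
      (fun w hw => (mem_ball_zero_iff.mp (hmap hw)).le) hz
  have hφ'_bd (z) (hz : z ∈ ball (0 : ℂ) 1) : ‖deriv (fun z => z * τ z) z‖ ≤ A :=
    norm_le_add_mul_of_norm_deriv_le hφ' hM hz
  have hτ'_bd (z) (hz : z ∈ ball (0 : ℂ) 1) : ‖deriv τ z‖ ≤ A + 1 := by
    rw [← div_one (A + 1)]
    refine norm_le_div_of_norm_id_mul_le hτ' (fun w hw => ?_) hz
    rw [show w * deriv τ w = deriv (fun z => z * τ z) w - τ w by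
      rw [deriv_id_mul (hτ.differentiableAt (hU.mem_nhds hw))]; ring]
    exact (norm_sub_le _ _).trans (add_le_add (hφ'_bd w hw) (hτ_bd w hw))
  have hτ''_bd (z) (hz : z ∈ ball (0 : ℂ) 1) :
      ‖deriv (deriv τ) z‖ ≤ M + 2 * (A + 1) := by
    rw [← div_one (M + 2 * (A + 1))]
    refine norm_le_div_of_norm_id_mul_le (hτ'.deriv hU) (fun w hw => ?_) hz
    rw [show w * deriv (deriv τ) w = deriv (deriv fun z => z * τ z) w - 2 * deriv τ w by
      rw [deriv_deriv_id_mul (eventually_of_mem (hU.mem_nhds hw) fun v hv =>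
        hτ.differentiableAt (hU.mem_nhds hv)) (hτ'.differentiableAt (hU.mem_nhds hw))]; ring]
    refine (norm_sub_le _ _).trans (add_le_add (hM w hw) ?_)
    rw [norm_mul, RCLike.norm_ofNat]
    exact mul_le_mul_of_nonneg_left (hτ'_bd w hw) zero_le_two
  exact ⟨⟨_, hτ_bd⟩, ⟨_, hτ'_bd⟩, ⟨_, hτ''_bd⟩⟩
end

section
/- Let φ : D → D be holomorphic with a fixed point a ∈ D (φ(a) = a), let ψ be holomorphic on D, and let λ ∈ ℂ. Suppose f is holomorphic on D and satisfies ψ(z)·f(φ(z)) = λ·f(z) for all z ∈ D. If λ ≠ ψ(a)·(φ'(a))^n for every n ∈ ℕ (including n = 0), then f is identically zero on D. -/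
/-!
Near the fixed point write `f z = (z - a) ^ n • g z` with `n` the order of vanishing of `f` at `a`
and `g a ≠ 0`. Since `φ z - a = (z - a) * slope φ a z`, the equation becomes, after cancelling
`(z - a) ^ n` off `a`, `ψ z • slope φ a z ^ n • g (φ z) = λ • g z`; letting `z → a` gives
`λ = ψ a * φ'(a) ^ n`. So if `λ` is no such number, `f` vanishes near `a`, hence on the whole disc.
-/

open Metric Filter Topology

section

variable {𝕜 E : Type*} [NontriviallyNormedField 𝕜] [NormedAddCommGroup E] [NormedSpace 𝕜 E]

theorem comp_eventually_eq_sub_pow_smul_slope_pow_smul {φ : 𝕜 → 𝕜} {f g : 𝕜 → E} {a : 𝕜}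
    {n : ℕ} (hφ : ContinuousAt φ a) (hfix : φ a = a)
    (hfg : ∀ᶠ z in 𝓝 a, f z = (z - a) ^ n • g z) :
    ∀ᶠ z in 𝓝 a, f (φ z) = (z - a) ^ n • slope φ a z ^ n • g (φ z) := by
  have hφa : Tendsto φ (𝓝 a) (𝓝 a) := by simpa only [hfix] using hφ.tendsto
  filter_upwards [hφa.eventually hfg] with z hz
  have hslope : (z - a) * slope φ a z = φ z - a := by
    rw [← smul_eq_mul, sub_smul_slope, vsub_eq_sub, hfix]
  rw [hz, smul_smul, ← mul_pow, hslope]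

theorem eq_mul_deriv_pow_of_smul_comp_eventually_eq {φ ψ : 𝕜 → 𝕜} {f : 𝕜 → E} {a lam : 𝕜}
    {n : ℕ} (hφ : DifferentiableAt 𝕜 φ a) (hfix : φ a = a) (hψ : ContinuousAt ψ a)
    (hf : AnalyticAt 𝕜 f a) (hn : analyticOrderAt f a = n)
    (heq : ∀ᶠ z in 𝓝 a, ψ z • f (φ z) = lam • f z) :
    lam = ψ a * deriv φ a ^ n := by
  obtain ⟨g, hg, hga, hfg⟩ := hf.analyticOrderAt_eq_natCast.mp hn
  have hcomp := comp_eventually_eq_sub_pow_smul_slope_pow_smul hφ.continuousAt hfix hfg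
  have hpunct : ∀ᶠ z in 𝓝[≠] a, ψ z • slope φ a z ^ n • g (φ z) = lam • g z := by
    filter_upwards [nhdsWithin_le_nhds (heq.and (hfg.and hcomp)), self_mem_nhdsWithin]
      with z ⟨hz, hfz, hfφz⟩ hza
    rw [hfz, hfφz, smul_comm (ψ z), smul_comm lam] at hz
    exact smul_right_injective E (pow_ne_zero n (sub_ne_zero.mpr hza)) hz
  have hφa : Tendsto φ (𝓝 a) (𝓝 a) := by simpa only [hfix] using hφ.continuousAt.tendsto
  have hgφ : Tendsto (fun z => g (φ z)) (𝓝 a) (𝓝 (g a)) := hg.continuousAt.tendsto.comp hφa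
  have hlhs : Tendsto (fun z => ψ z • slope φ a z ^ n • g (φ z)) (𝓝[≠] a)
      (𝓝 (ψ a • deriv φ a ^ n • g a)) :=
    (hψ.tendsto.mono_left nhdsWithin_le_nhds).smul
      ((hφ.hasDerivAt.tendsto_slope.pow n).smul (hgφ.mono_left nhdsWithin_le_nhds))
  have hrhs : Tendsto (fun z => lam • g z) (𝓝[≠] a) (𝓝 (lam • g a)) :=
    (hg.continuousAt.tendsto.mono_left nhdsWithin_le_nhds).const_smul lam
  have hlim : (ψ a * deriv φ a ^ n) • g a = lam • g a := by
    rw [mul_smul]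
    exact tendsto_nhds_unique (hlhs.congr' hpunct) hrhs
  exact (smul_left_injective 𝕜 hga hlim).symm

end

theorem stmt_8_general (φ ψ f : ℂ → ℂ) (a : ℂ) (lam : ℂ)
    (ha : a ∈ ball (0:ℂ) 1)
    (hφ : DifferentiableOn ℂ φ (ball (0:ℂ) 1))
    (hfix : φ a = a)
    (hψ : DifferentiableOn ℂ ψ (ball (0:ℂ) 1))
    (hf : DifferentiableOn ℂ f (ball (0:ℂ) 1))
    (heq : ∀ z ∈ ball (0:ℂ) 1, ψ z * f (φ z) = lam * f z)
    (hlam : ∀ n : ℕ, lam ≠ ψ a * (deriv φ a) ^ n) :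
    ∀ z ∈ ball (0:ℂ) 1, f z = 0 := by
  have hfa : AnalyticOnNhd ℂ f (ball 0 1) := hf.analyticOnNhd isOpen_ball
  suffices hloc : ∀ᶠ z in 𝓝 a, f z = 0 from fun z hz =>
    hfa.eqOn_zero_of_preconnected_of_eventuallyEq_zero (convex_ball 0 1).isPreconnected ha hloc hz
  by_contra hne
  obtain ⟨n, hn⟩ := ENat.ne_top_iff_exists.mp (mt analyticOrderAt_eq_top.mp hne)
  have hball : ball (0:ℂ) 1 ∈ 𝓝 a := isOpen_ball.mem_nhds ha
  exact hlam n <| eq_mul_deriv_pow_of_smul_comp_eventually_eq (hφ.differentiableAt hball) hfix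
    (hψ.differentiableAt hball).continuousAt (hfa a ha) hn.symm (eventually_of_mem hball heq)

theorem stmt_8 (φ ψ f : ℂ → ℂ) (a : ℂ) (lam : ℂ)
    (ha : a ∈ ball (0:ℂ) 1)
    (hφ : DifferentiableOn ℂ φ (ball (0:ℂ) 1))
    (hmap : Set.MapsTo φ (ball (0:ℂ) 1) (ball (0:ℂ) 1))
    (hfix : φ a = a)
    (hψ : DifferentiableOn ℂ ψ (ball (0:ℂ) 1))
    (hf : DifferentiableOn ℂ f (ball (0:ℂ) 1))
    (heq : ∀ z ∈ ball (0:ℂ) 1, ψ z * f (φ z) = lam * f z)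
    (hlam : ∀ n : ℕ, lam ≠ ψ a * (deriv φ a) ^ n) :
    ∀ z ∈ ball (0:ℂ) 1, f z = 0 :=
  stmt_8_general φ ψ f a lam ha hφ hfix hψ hf heq hlam
end

section
/- Let φ : D → D be holomorphic with φ(a) = a for a ∈ D, ψ holomorphic on D, λ ∈ ℂ, and suppose the holomorphic function f satisfies ψ·(f∘φ) = λf on D, and that λ ≠ ψ(a)·(φ'(a))^k for all k = 0, 1, ..., n-1. Then f and all its derivatives up to order n-1 vanish at a: f^{(k)}(a) = 0 for 0 ≤ k ≤ n-1. -/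
open Metric Filter Topology

section FixedPoint

variable {𝕜 E : Type*} [NontriviallyNormedField 𝕜] [NormedAddCommGroup E] [NormedSpace 𝕜 E]
  {f : 𝕜 → E} {φ ψ : 𝕜 → 𝕜} {a lam : 𝕜}

/-- Writing `f = (z - a) ^ m • g` with `g a ≠ 0` and `φ z - a = (z - a) * u z` with
`u a = φ' a`, the factor `(z - a) ^ m` cancels from the equation off `a`; letting `z → a`
then gives `(ψ a * φ' a ^ m) • g a = lam • g a`. -/
theorem AnalyticAt.eq_mul_deriv_pow_of_smul_comp_eq_smul {m : ℕ} (hf : AnalyticAt 𝕜 f a)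
    (hφ : DifferentiableAt 𝕜 φ a) (hfix : φ a = a) (hψ : ContinuousAt ψ a)
    (heq : ∀ᶠ z in 𝓝 a, ψ z • f (φ z) = lam • f z) (hm : analyticOrderAt f a = m) :
    lam = ψ a * deriv φ a ^ m := by
  obtain ⟨g, hg, hga, hfg⟩ := hf.analyticOrderAt_eq_natCast.1 hm
  have hφu (z : 𝕜) : φ z - a = (z - a) * dslope φ a z := by
    simpa [hfix, smul_eq_mul] using (sub_smul_dslope φ a z).symm
  have hφa : Tendsto φ (𝓝 a) (𝓝 a) := hφ.continuousAt.tendsto.trans_eq (by rw [hfix])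
  have hfgφ : ∀ᶠ z in 𝓝 a, f (φ z) = (φ z - a) ^ m • g (φ z) := hφa.eventually hfg
  set A : 𝕜 → E := fun z ↦ (ψ z * dslope φ a z ^ m) • g (φ z)
  set B : 𝕜 → E := fun z ↦ lam • g z
  have hAB : A =ᶠ[𝓝[≠] a] B := by
    filter_upwards [self_mem_nhdsWithin, nhdsWithin_le_nhds (heq.and (hfg.and hfgφ))]
      with z hz ⟨he, hfz, hfφz⟩
    rw [hfz, hfφz, hφu, mul_pow] at he
    refine smul_right_injective E (pow_ne_zero m (sub_ne_zero.2 hz)) ?_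
    simp only [A, B, smul_smul] at he ⊢
    convert he using 2 <;> ring
  have hA : ContinuousAt A a :=
    (hψ.mul ((continuousAt_dslope_same.2 hφ).pow m)).smul
      (hg.continuousAt.comp_of_eq hφ.continuousAt hfix)
  have hB : ContinuousAt B a := continuousAt_const.smul hg.continuousAt
  have hAa : A a = B a :=
    tendsto_nhds_unique_of_eventuallyEq hA.continuousWithinAt hB.continuousWithinAt hAB
  simp only [A, B, hfix, dslope_same] at hAa
  exact (smul_left_injective 𝕜 hga hAa).symm

theorem AnalyticAt.natCast_le_analyticOrderAt_of_smul_comp_eq_smul {n : ℕ}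
    (hf : AnalyticAt 𝕜 f a) (hφ : DifferentiableAt 𝕜 φ a) (hfix : φ a = a)
    (hψ : ContinuousAt ψ a) (heq : ∀ᶠ z in 𝓝 a, ψ z • f (φ z) = lam • f z)
    (hlam : ∀ k < n, lam ≠ ψ a * deriv φ a ^ k) :
    n ≤ analyticOrderAt f a := by
  by_contra! hlt
  obtain ⟨m, hm⟩ := ENat.ne_top_iff_exists.1 (ne_top_of_lt hlt)
  rw [← hm, Nat.cast_lt] at hlt
  exact hlam m hlt (hf.eq_mul_deriv_pow_of_smul_comp_eq_smul hφ hfix hψ heq hm.symm)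

end FixedPoint

theorem stmt_9_general (φ ψ f : ℂ → ℂ) (a : ℂ) (lam : ℂ) (n : ℕ)
    (ha : a ∈ ball (0:ℂ) 1)
    (hφ : DifferentiableOn ℂ φ (ball (0:ℂ) 1))
    (hfix : φ a = a)
    (hψ : DifferentiableOn ℂ ψ (ball (0:ℂ) 1))
    (hf : DifferentiableOn ℂ f (ball (0:ℂ) 1))
    (heq : ∀ z ∈ ball (0:ℂ) 1, ψ z * f (φ z) = lam * f z)
    (hlam : ∀ k : ℕ, k < n → lam ≠ ψ a * (deriv φ a) ^ k) :
    ∀ k : ℕ, k < n → iteratedDeriv k f a = 0 := by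
  have hball : ball (0:ℂ) 1 ∈ 𝓝 a := isOpen_ball.mem_nhds ha
  have hfa : AnalyticAt ℂ f a := hf.analyticAt hball
  have horder : n ≤ analyticOrderAt f a :=
    hfa.natCast_le_analyticOrderAt_of_smul_comp_eq_smul (hφ.differentiableAt hball) hfix
      (hψ.differentiableAt hball).continuousAt (eventually_of_mem hball heq) hlam
  exact (natCast_le_analyticOrderAt_iff_iteratedDeriv_eq_zero hfa).1 horder

theorem stmt_9 (φ ψ f : ℂ → ℂ) (a : ℂ) (lam : ℂ) (n : ℕ)
    (ha : a ∈ ball (0:ℂ) 1)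
    (hφ : DifferentiableOn ℂ φ (ball (0:ℂ) 1))
    (hmap : Set.MapsTo φ (ball (0:ℂ) 1) (ball (0:ℂ) 1))
    (hfix : φ a = a)
    (hψ : DifferentiableOn ℂ ψ (ball (0:ℂ) 1))
    (hf : DifferentiableOn ℂ f (ball (0:ℂ) 1))
    (heq : ∀ z ∈ ball (0:ℂ) 1, ψ z * f (φ z) = lam * f z)
    (hlam : ∀ k : ℕ, k < n → lam ≠ ψ a * (deriv φ a) ^ k) :
    ∀ k : ℕ, k < n → iteratedDeriv k f a = 0 :=
  stmt_9_general φ ψ f a lam n ha hφ hfix hψ hf heq hlam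
end

section
/- Let φ : D → D be holomorphic with no fixed point in D. Then there exist a point ζ on the unit circle and a sequence (z_n) in D such that z_n → ζ, φ(z_n) → ζ, and limsup (1-|φ(z_n)|)/(1-|z_n|) ≤ 1. -/
/-!
For `0 ≤ r < 1` the map `rφ` sends the unit disc into the compact disc `‖z‖ ≤ r`, and by the
Schwarz–Pick lemma it strictly decreases the pseudo-hyperbolic distance `‖(a - z) / (1 - āz)‖`
there; a minimiser of the displacement `z ↦ d(z, rφ(z))` is therefore a fixed point `p_r`.
From `rφ(p_r) = p_r` we get `‖p_r‖ ≤ ‖φ(p_r)‖`, i.e. `(1 - ‖φ(p_r)‖)/(1 - ‖p_r‖) ≤ 1`, and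
`φ(p_r) = p_r / r`. Along `r → 1` a subsequence of `p_r` converges to some `ζ` with `φ(p_r) → ζ`
as well; `ζ` cannot lie in the open disc, since it would then be a fixed point of `φ`.
-/

open Metric Filter Set Function Complex ComplexConjugate

-- `‖diskAut a z‖` is the pseudo-hyperbolic distance between `a` and `z`.
noncomputable def diskAut (a z : ℂ) : ℂ := (a - z) / (1 - conj a * z)

section diskAut

variable {a z : ℂ}

theorem normSq_one_sub_conj_mul_sub_normSq_sub (a z : ℂ) :
    normSq (1 - conj a * z) - normSq (a - z) = (1 - normSq a) * (1 - normSq z) := by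
  simp only [normSq_apply, sub_re, sub_im, mul_re, mul_im, one_re, one_im, conj_re, conj_im]
  ring

theorem one_sub_conj_mul_ne_zero (ha : ‖a‖ < 1) (hz : ‖z‖ < 1) : 1 - conj a * z ≠ 0 := by
  refine sub_ne_zero.2 fun h => ?_
  have : ‖conj a * z‖ < 1 := by
    rw [norm_mul, RCLike.norm_conj]
    nlinarith [norm_nonneg a, norm_nonneg z]
  simp [← h] at this

theorem norm_diskAut_lt_one (ha : ‖a‖ < 1) (hz : ‖z‖ < 1) : ‖diskAut a z‖ < 1 := by
  have hd := norm_pos_iff.2 (one_sub_conj_mul_ne_zero ha hz)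
  rw [diskAut, norm_div, div_lt_one hd, ← sq_lt_sq₀ (norm_nonneg _) hd.le, ← normSq_eq_norm_sq,
    ← normSq_eq_norm_sq, ← sub_pos, normSq_one_sub_conj_mul_sub_normSq_sub]
  have hsq : ∀ w : ℂ, ‖w‖ < 1 → 0 < 1 - normSq w := fun w hw => by
    rw [normSq_eq_norm_sq]; nlinarith [norm_nonneg w]
  exact mul_pos (hsq a ha) (hsq z hz)

theorem diskAut_self (a : ℂ) : diskAut a a = 0 := by simp [diskAut]

theorem diskAut_zero (a : ℂ) : diskAut a 0 = a := by simp [diskAut]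

theorem diskAut_eq_zero_iff (ha : ‖a‖ < 1) (hz : ‖z‖ < 1) : diskAut a z = 0 ↔ a = z := by
  simp [diskAut, one_sub_conj_mul_ne_zero ha hz, sub_eq_zero]

theorem diskAut_diskAut (ha : ‖a‖ < 1) (hz : ‖z‖ < 1) : diskAut a (diskAut a z) = z := by
  have hD := one_sub_conj_mul_ne_zero ha hz
  have haa := one_sub_conj_mul_ne_zero ha ha
  have hnum : a - diskAut a z = z * (1 - conj a * a) / (1 - conj a * z) := by
    rw [diskAut, eq_div_iff hD, sub_mul, div_mul_cancel₀ _ hD]; ring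
  have hden : 1 - conj a * diskAut a z = (1 - conj a * a) / (1 - conj a * z) := by
    rw [diskAut, eq_div_iff hD, sub_mul, mul_assoc, div_mul_cancel₀ _ hD]; ring
  rw [diskAut, hnum, hden, div_div_div_cancel_right₀ hD, mul_div_cancel_right₀ _ haa]

theorem mapsTo_diskAut (ha : ‖a‖ < 1) : MapsTo (diskAut a) (ball 0 1) (ball 0 1) := fun z hz => by
  rw [mem_ball_zero_iff] at hz ⊢
  exact norm_diskAut_lt_one ha hz

theorem differentiableOn_diskAut (ha : ‖a‖ < 1) : DifferentiableOn ℂ (diskAut a) (ball 0 1) :=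
  ((differentiableOn_const a).sub differentiableOn_id).div
    ((differentiableOn_const 1).sub ((differentiableOn_const _).mul differentiableOn_id))
    fun _ hz => one_sub_conj_mul_ne_zero ha (mem_ball_zero_iff.1 hz)

theorem continuousOn_uncurry_diskAut :
    ContinuousOn (uncurry diskAut) (ball (0 : ℂ) 1 ×ˢ ball 0 1) :=
  (continuous_fst.sub continuous_snd).continuousOn.div
    (continuous_const.sub ((continuous_conj.comp continuous_fst).mul continuous_snd)).continuousOn
    fun _ hp => one_sub_conj_mul_ne_zero (mem_ball_zero_iff.1 hp.1) (mem_ball_zero_iff.1 hp.2)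

end diskAut

theorem norm_diskAut_le_of_mapsTo_ball {φ : ℂ → ℂ} (hφ : DifferentiableOn ℂ φ (ball 0 1))
    (hmap : MapsTo φ (ball 0 1) (ball 0 1)) {a b : ℂ} (ha : ‖a‖ < 1) (hb : ‖b‖ < 1) :
    ‖diskAut (φ a) (φ b)‖ ≤ ‖diskAut a b‖ := by
  have hφa : ‖φ a‖ < 1 := mem_ball_zero_iff.1 (hmap (mem_ball_zero_iff.2 ha))
  have hg := Complex.norm_le_norm_of_mapsTo_ball
    ((differentiableOn_diskAut hφa).comp (hφ.comp (differentiableOn_diskAut ha) (mapsTo_diskAut ha))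
      (hmap.comp (mapsTo_diskAut ha)))
    (((mapsTo_diskAut hφa).comp (hmap.comp (mapsTo_diskAut ha))).mono_right ball_subset_closedBall)
    (by simp [diskAut_zero, diskAut_self]) (norm_diskAut_lt_one ha hb)
  simpa [diskAut_diskAut ha hb] using hg

theorem mul_norm_one_sub_lt_norm_one_sub_sq_mul {u : ℂ} (hu : ‖u‖ < 1) {r : ℝ} (hr₀ : 0 ≤ r)
    (hr₁ : r < 1) : r * ‖1 - u‖ < ‖1 - (r : ℂ) ^ 2 * u‖ := by
  refine lt_of_pow_lt_pow_left₀ 2 (norm_nonneg _) ?_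
  have hu' : normSq u < 1 := by rw [normSq_eq_norm_sq]; nlinarith [norm_nonneg u]
  have key : ‖1 - (r : ℂ) ^ 2 * u‖ ^ 2 - (r * ‖1 - u‖) ^ 2
      = (1 - r ^ 2) * (1 - r ^ 2 * normSq u) := by
    simp only [mul_pow, ← normSq_eq_norm_sq, normSq_apply, sub_re, sub_im, mul_re, mul_im,
      one_re, one_im, ← ofReal_pow, ofReal_re, ofReal_im]
    ring
  have h₁ : 0 < 1 - r ^ 2 := by nlinarith
  have h₂ : 0 < 1 - r ^ 2 * normSq u := by nlinarith [normSq_nonneg u]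
  nlinarith [mul_pos h₁ h₂]

theorem norm_diskAut_mul_lt {a b : ℂ} (ha : ‖a‖ < 1) (hb : ‖b‖ < 1) (hab : a ≠ b) {r : ℝ}
    (hr₀ : 0 ≤ r) (hr₁ : r < 1) : ‖diskAut (r * a) (r * b)‖ < ‖diskAut a b‖ := by
  have hu : ‖conj a * b‖ < 1 := by
    rw [norm_mul, RCLike.norm_conj]; nlinarith [norm_nonneg a, norm_nonneg b]
  have hrab : ‖(r : ℂ) * (a - b)‖ = r * ‖a - b‖ := by
    rw [norm_mul, norm_real, Real.norm_of_nonneg hr₀]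
  have hden : 1 - conj ((r : ℂ) * a) * (r * b) = 1 - (r : ℂ) ^ 2 * (conj a * b) := by
    rw [map_mul, conj_ofReal]; ring
  have hpos := norm_pos_iff.2 (one_sub_conj_mul_ne_zero ha hb)
  have hrpos : 0 < ‖1 - (r : ℂ) ^ 2 * (conj a * b)‖ :=
    (mul_nonneg hr₀ (norm_nonneg _)).trans_lt (mul_norm_one_sub_lt_norm_one_sub_sq_mul hu hr₀ hr₁)
  rw [diskAut, diskAut, ← mul_sub, hden, norm_div, norm_div, hrab, div_lt_div_iff₀ hrpos hpos,
    mul_right_comm, mul_comm r]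
  have := mul_lt_mul_of_pos_left (mul_norm_one_sub_lt_norm_one_sub_sq_mul hu hr₀ hr₁)
    (norm_pos_iff.2 (sub_ne_zero.2 hab))
  linarith

theorem IsCompact.exists_isFixedPt_of_lt {X : Type*} [TopologicalSpace X] {K : Set X}
    (hK : IsCompact K) (hne : K.Nonempty) {f : X → X} (hf : ContinuousOn f K)
    (hfK : MapsTo f K K) {d : X → X → ℝ} (hd : ContinuousOn (uncurry d) (K ×ˢ K))
    (hlt : ∀ x ∈ K, ∀ y ∈ K, x ≠ y → d (f x) (f y) < d x y) : ∃ p ∈ K, IsFixedPt f p := by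
  obtain ⟨p, hp, hmin⟩ := hK.exists_isMinOn hne
    (hd.comp (continuousOn_id.prodMk hf) fun x hx => ⟨hx, hfK hx⟩)
  refine ⟨p, hp, by_contra fun hfp => ?_⟩
  exact (hlt p hp (f p) (hfK hp) (Ne.symm hfp)).not_ge (hmin (hfK hp))

theorem exists_mul_apply_eq_self {φ : ℂ → ℂ} (hφ : DifferentiableOn ℂ φ (ball 0 1))
    (hmap : MapsTo φ (ball 0 1) (ball 0 1)) {r : ℝ} (hr₀ : 0 ≤ r) (hr₁ : r < 1) :
    ∃ p ∈ ball (0 : ℂ) 1, r * φ p = p := by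
  have hsub : closedBall (0 : ℂ) r ⊆ ball 0 1 := closedBall_subset_ball hr₁
  have hmapsr : MapsTo (fun z => (r : ℂ) * φ z) (ball 0 1) (closedBall 0 r) := fun z hz => by
    have := mem_ball_zero_iff.1 (hmap hz)
    rw [mem_closedBall_zero_iff, norm_mul, norm_real, Real.norm_of_nonneg hr₀]
    exact mul_le_of_le_one_right hr₀ this.le
  have hlt : ∀ x ∈ closedBall (0 : ℂ) r, ∀ y ∈ closedBall (0 : ℂ) r, x ≠ y →
      ‖diskAut (r * φ x) (r * φ y)‖ < ‖diskAut x y‖ := by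
    intro x hx y hy hxy
    have hx₁ := mem_ball_zero_iff.1 (hsub hx)
    have hy₁ := mem_ball_zero_iff.1 (hsub hy)
    rcases eq_or_ne (φ x) (φ y) with hφxy | hφxy
    · simpa [hφxy, diskAut_self, diskAut_eq_zero_iff hx₁ hy₁] using hxy
    · calc ‖diskAut (r * φ x) (r * φ y)‖ < ‖diskAut (φ x) (φ y)‖ :=
            norm_diskAut_mul_lt (mem_ball_zero_iff.1 (hmap (hsub hx)))
              (mem_ball_zero_iff.1 (hmap (hsub hy))) hφxy hr₀ hr₁
        _ ≤ ‖diskAut x y‖ := norm_diskAut_le_of_mapsTo_ball hφ hmap hx₁ hy₁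
  obtain ⟨p, hp, hfix⟩ := (isCompact_closedBall (0 : ℂ) r).exists_isFixedPt_of_lt
    (nonempty_closedBall.2 hr₀) (d := fun a b => ‖diskAut a b‖)
    (continuousOn_const.mul (hφ.continuousOn.mono hsub)) (hmapsr.mono_left hsub)
    (continuousOn_uncurry_diskAut.norm.mono (prod_mono hsub hsub)) hlt
  exact ⟨p, hsub hp, hfix⟩

theorem norm_eq_one_of_tendsto_of_forall_ne {φ : ℂ → ℂ} (hφ : ContinuousOn φ (ball 0 1))
    (hnf : ∀ z ∈ ball (0 : ℂ) 1, φ z ≠ z) {z : ℕ → ℂ} {ζ : ℂ} (hz : ∀ n, z n ∈ ball 0 1)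
    (hzζ : Tendsto z atTop (nhds ζ)) (hφζ : Tendsto (fun n => φ (z n)) atTop (nhds ζ)) :
    ‖ζ‖ = 1 := by
  have hle : ‖ζ‖ ≤ 1 :=
    le_of_tendsto' hzζ.norm fun n => (mem_ball_zero_iff.1 (hz n)).le
  refine hle.eq_or_lt.resolve_right fun hlt => hnf ζ (mem_ball_zero_iff.2 hlt) ?_
  have hζ : ContinuousAt φ ζ := hφ.continuousAt (isOpen_ball.mem_nhds (mem_ball_zero_iff.2 hlt))
  exact tendsto_nhds_unique (hζ.tendsto.comp hzζ) hφζ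

theorem limsup_one_sub_div_one_sub_le_one {ι : Type*} {l : Filter ι} [l.NeBot] {x y : ι → ℝ}
    (hx : ∀ i, x i < 1) (hy : ∀ i, y i ≤ 1) (hxy : ∀ i, x i ≤ y i) :
    limsup (fun i => (1 - y i) / (1 - x i)) l ≤ 1 :=
  limsup_le_of_le
    (isCoboundedUnder_le_of_le l (x := 0) fun i =>
      div_nonneg (by linarith [hy i]) (by linarith [hx i]))
    (Eventually.of_forall fun i => (div_le_one (by linarith [hx i])).2 (by linarith [hxy i]))

theorem stmt_12 (φ : ℂ → ℂ)
    (hφ : DifferentiableOn ℂ φ (ball (0:ℂ) 1))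
    (hmap : Set.MapsTo φ (ball (0:ℂ) 1) (ball (0:ℂ) 1))
    (hnf : ∀ z ∈ ball (0:ℂ) 1, φ z ≠ z) :
    ∃ ζ : ℂ, ‖ζ‖ = 1 ∧ ∃ z : ℕ → ℂ,
      (∀ n, z n ∈ ball (0:ℂ) 1) ∧
      Tendsto z atTop (nhds ζ) ∧
      Tendsto (fun n => φ (z n)) atTop (nhds ζ) ∧
      Filter.limsup (fun n => (1 - ‖φ (z n)‖) / (1 - ‖z n‖)) atTop ≤ 1 := by
  obtain ⟨r, -, hr, hr_lim⟩ := exists_seq_strictMono_tendsto' (zero_lt_one' ℝ)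
  choose p hp hp_fix using fun n => exists_mul_apply_eq_self hφ hmap (hr n).1.le (hr n).2
  have hφp : ∀ n, φ (p n) = p n / r n := fun n =>
    eq_div_of_mul_eq (ofReal_ne_zero.2 (hr n).1.ne') (by rw [mul_comm, hp_fix])
  have hp_le : ∀ n, ‖p n‖ ≤ ‖φ (p n)‖ := fun n => by
    conv_lhs => rw [← hp_fix n, norm_mul, norm_real, Real.norm_of_nonneg (hr n).1.le]
    exact mul_le_of_le_one_left (norm_nonneg _) (hr n).2.le
  obtain ⟨ζ, -, g, hg, hpg⟩ := (isCompact_closedBall (0 : ℂ) 1).tendsto_subseq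
    fun n => ball_subset_closedBall (hp n)
  have hφpg : Tendsto (fun k => φ (p (g k))) atTop (nhds ζ) := by
    simpa [hφp, Function.comp_def, Pi.div_def] using
      hpg.div (hr_lim.comp hg.tendsto_atTop).ofReal one_ne_zero
  have hpg_mem : ∀ k, p (g k) ∈ ball 0 1 := fun k => hp (g k)
  refine ⟨ζ, norm_eq_one_of_tendsto_of_forall_ne hφ.continuousOn hnf hpg_mem hpg hφpg,
    fun k => p (g k), hpg_mem, hpg, hφpg, ?_⟩
  exact limsup_one_sub_div_one_sub_le_one (fun k => mem_ball_zero_iff.1 (hpg_mem k))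
    (fun k => (mem_ball_zero_iff.1 (hmap (hpg_mem k))).le) fun k => hp_le (g k)
end

section
/- For r ∈ (0,1), the function φ(z) = exp((1-r)(z+1)/(rz-1)) is a holomorphic self-map of the open unit disc D, and there exists a constant C (depending only on r) such that (1-|z|²)/(1-|φ(z)|²) ≤ C·(1+r)/(1-r) for all z ∈ D. -/
/-!
Write `φ = exp w` with `w = (1 - r)(z + 1)/(rz - 1)`, so `|φ| = exp (Re w)` and
`Re w = (1 - r)(r|z|² - 1 - (1 - r) Re z)/|rz - 1|² ≤ -(1 - r)(1 - |z|)/(1 + r) < 0`.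
With `t = 2(1 - r)(1 - |z|)/(1 + r) ∈ (0, 2]` this gives `1 - |φ|² ≥ 1 - e^{-t} ≥ t/(1 + t) ≥ t/3`,
while `1 - |z|² ≤ 2(1 - |z|) = t(1 + r)/(1 - r)`; hence `C = 3` works.
-/

open Metric Complex

noncomputable def mobiusMap (r : ℝ) (z : ℂ) : ℂ := (1 - r) * (z + 1) / (r * z - 1)

lemma ofReal_mul_sub_one_ne_zero {r : ℝ} (hr : |r| ≤ 1) {z : ℂ} (hz : ‖z‖ < 1) :
    (r : ℂ) * z - 1 ≠ 0 := by
  intro h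
  have hrz : ‖(r : ℂ) * z‖ = 1 := by rw [sub_eq_zero.mp h, norm_one]
  rw [norm_mul, norm_real, Real.norm_eq_abs] at hrz
  nlinarith [abs_nonneg r, norm_nonneg z]

lemma differentiableOn_mobiusMap {r : ℝ} (hr : |r| ≤ 1) :
    DifferentiableOn ℂ (mobiusMap r) (ball 0 1) := fun z hz =>
  (DifferentiableAt.div (by fun_prop)
    (by fun_prop : DifferentiableAt ℂ (fun w : ℂ => (r : ℂ) * w - 1) z)
    (ofReal_mul_sub_one_ne_zero hr (mem_ball_zero_iff.mp hz))).differentiableWithinAt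

lemma mobiusMap_re (r : ℝ) (z : ℂ) :
    (mobiusMap r z).re = (1 - r) * (r * ‖z‖ ^ 2 - 1 - (1 - r) * z.re) / normSq (r * z - 1) := by
  rw [mobiusMap, div_re, ← add_div, Complex.sq_norm, normSq_apply z]
  congr 1
  simp only [mul_re, mul_im, add_re, add_im, sub_re, sub_im, one_re, one_im, ofReal_re, ofReal_im]
  ring

lemma normSq_ofReal_mul_sub_one_le {r : ℝ} (hr : 0 ≤ r) (z : ℂ) :
    normSq (r * z - 1) ≤ (1 + r * ‖z‖) ^ 2 := by
  have h : ‖(r : ℂ) * z - 1‖ ≤ 1 + r * ‖z‖ := by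
    calc ‖(r : ℂ) * z - 1‖ ≤ ‖(r : ℂ) * z‖ + ‖(1 : ℂ)‖ := norm_sub_le _ _
      _ = 1 + r * ‖z‖ := by rw [norm_mul, norm_real, Real.norm_of_nonneg hr, norm_one, add_comm]
  rw [normSq_eq_norm_sq]
  exact pow_le_pow_left₀ (norm_nonneg _) h 2

lemma mobiusMap_re_le {r : ℝ} (hr0 : 0 ≤ r) (hr1 : r ≤ 1) {z : ℂ} (hz : ‖z‖ < 1) :
    (mobiusMap r z).re ≤ -((1 - r) * (1 - ‖z‖) / (1 + r)) := by
  have hpos : 0 < normSq (r * z - 1) :=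
    normSq_pos.mpr (ofReal_mul_sub_one_ne_zero (abs_le.mpr ⟨by linarith, hr1⟩) hz)
  -- from `-‖z‖ ≤ re z`: the bound `r‖z‖² - 1 + (1 - r)‖z‖` factors
  have hnum : r * ‖z‖ ^ 2 - 1 - (1 - r) * z.re ≤ -((1 + r * ‖z‖) * (1 - ‖z‖)) := by
    nlinarith [neg_abs_le z.re, abs_re_le_norm z]
  calc (mobiusMap r z).re
      ≤ -((1 - r) * (1 - ‖z‖) * (1 + r * ‖z‖) / normSq (r * z - 1)) := by
        rw [mobiusMap_re, ← neg_div]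
        gcongr
        nlinarith
    _ ≤ -((1 - r) * (1 - ‖z‖) * (1 + r * ‖z‖) / (1 + r * ‖z‖) ^ 2) :=
        neg_le_neg (div_le_div_of_nonneg_left (by positivity) hpos
          (normSq_ofReal_mul_sub_one_le hr0 z))
    _ = -((1 - r) * (1 - ‖z‖) / (1 + r * ‖z‖)) := by field_simp
    _ ≤ -((1 - r) * (1 - ‖z‖) / (1 + r)) := by
        gcongr
        nlinarith [norm_nonneg z]

lemma norm_exp_mobiusMap_lt_one {r : ℝ} (hr0 : 0 ≤ r) (hr1 : r < 1) {z : ℂ} (hz : ‖z‖ < 1) :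
    ‖exp (mobiusMap r z)‖ < 1 := by
  rw [norm_exp, Real.exp_lt_one_iff]
  have : 0 < (1 - r) * (1 - ‖z‖) / (1 + r) := by
    apply div_pos (mul_pos _ _) <;> linarith
  linarith [mobiusMap_re_le hr0 hr1.le hz]

lemma div_one_add_le_one_sub_exp_neg {t : ℝ} (ht : -1 < t) : t / (1 + t) ≤ 1 - Real.exp (-t) := by
  have h : Real.exp (-t) ≤ (1 + t)⁻¹ := by
    rw [Real.exp_neg]
    exact inv_anti₀ (by linarith) (by linarith [Real.add_one_le_exp t])
  have : t / (1 + t) = 1 - (1 + t)⁻¹ := by field_simp [(by linarith : 1 + t ≠ 0)]; ring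
  linarith

lemma one_sub_sq_norm_div_le {r : ℝ} (hr0 : 0 ≤ r) (hr1 : r < 1) {z : ℂ} (hz : ‖z‖ < 1) :
    (1 - ‖z‖ ^ 2) / (1 - ‖exp (mobiusMap r z)‖ ^ 2) ≤ 3 * (1 + r) / (1 - r) := by
  set t := 2 * (1 - r) * (1 - ‖z‖) / (1 + r) with ht_def
  have ht : 0 < t := by positivity
  have ht2 : t ≤ 2 := by
    rw [ht_def, div_le_iff₀ (by linarith)]
    nlinarith [norm_nonneg z]
  have hphi : t / 3 ≤ 1 - ‖exp (mobiusMap r z)‖ ^ 2 := by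
    have hsq : ‖exp (mobiusMap r z)‖ ^ 2 ≤ Real.exp (-t) := by
      rw [norm_exp, ← Real.exp_nat_mul, Real.exp_le_exp]
      have : t = 2 * ((1 - r) * (1 - ‖z‖) / (1 + r)) := by rw [ht_def]; ring
      push_cast
      linarith [mobiusMap_re_le hr0 hr1.le hz]
    have : t / 3 ≤ t / (1 + t) := div_le_div_of_nonneg_left ht.le (by linarith) (by linarith)
    linarith [div_one_add_le_one_sub_exp_neg (by linarith : -1 < t)]
  have hz2 : 1 - ‖z‖ ^ 2 ≤ t * (1 + r) / (1 - r) := by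
    rw [ht_def, le_div_iff₀ (by linarith)]
    field_simp
    nlinarith [mul_nonneg (by linarith : (0 : ℝ) ≤ 1 - r) (sq_nonneg (1 - ‖z‖))]
  calc (1 - ‖z‖ ^ 2) / (1 - ‖exp (mobiusMap r z)‖ ^ 2)
      ≤ t * (1 + r) / (1 - r) / (t / 3) :=
        div_le_div₀ (by positivity) hz2 (by positivity) hphi
    _ = 3 * (1 + r) / (1 - r) := by field_simp

theorem stmt_14 (r : ℝ) (hr0 : 0 < r) (hr1 : r < 1) :
    DifferentiableOn ℂ (fun z : ℂ => Complex.exp ((1 - (r:ℂ)) * (z + 1) / ((r:ℂ) * z - 1))) (ball (0:ℂ) 1) ∧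
    Set.MapsTo (fun z : ℂ => Complex.exp ((1 - (r:ℂ)) * (z + 1) / ((r:ℂ) * z - 1))) (ball (0:ℂ) 1) (ball (0:ℂ) 1) ∧
    ∃ C : ℝ, 0 < C ∧ ∀ z ∈ ball (0:ℂ) 1,
      (1 - ‖z‖^2) / (1 - ‖Complex.exp ((1 - (r:ℂ)) * (z + 1) / ((r:ℂ) * z - 1))‖^2)
        ≤ C * (1 + r) / (1 - r) := by
  change DifferentiableOn ℂ (fun z => exp (mobiusMap r z)) _ ∧
    Set.MapsTo (fun z => exp (mobiusMap r z)) _ _ ∧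
    ∃ C : ℝ, 0 < C ∧ ∀ z ∈ ball (0 : ℂ) 1,
      (1 - ‖z‖ ^ 2) / (1 - ‖exp (mobiusMap r z)‖ ^ 2) ≤ C * (1 + r) / (1 - r)
  refine ⟨(differentiableOn_mobiusMap (abs_le.mpr ⟨by linarith, hr1.le⟩)).cexp, fun z hz => ?_,
    3, by norm_num, fun z hz => ?_⟩
  · rw [mem_ball_zero_iff] at hz ⊢
    exact norm_exp_mobiusMap_lt_one hr0.le hr1 hz
  · exact one_sub_sq_norm_div_le hr0.le hr1 (mem_ball_zero_iff.mp hz)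
end
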